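/- Let X be a finite metric space whose metric d takes integer values in {0,1,…,n} and which is distance-invariant, i.e., for every radius t the cardinality of the ball B(x,t) = {y ∈ X : d(x,y) ≤ t} does not depend on the center x. Then for every subset Z = {z_1,…,z_N} ⊆ X of size N, the quadratic discrepancy satisfies D^{L2}(Z) = (1/2)·[ (1/|X|²)·Σ_{x,y∈X} Σ_{u∈X} |d(x,u) − d(y,u)| − (1/N²)·Σ_{i,j=1}^N Σ_{u∈X} |d(z_i,u) − d(z_j,u)| ]. -/

import Mathlib

/-!
Expanding the square writes the discrepancy through the kernel
`K y z = ∑ t ≤ n, ∑ x, 1_{B(x,t)} y * 1_{B(x,t)} z = ∑ x, (n + 1 - max (d x y) (d x z))`.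
Since `max a b = (a + b + |a - b|) / 2` and, by distance invariance, `∑ x, d x y` does not
depend on `y`, this kernel is `c - L / 2` with `L y z = ∑ u, |d y u - d z u|`. Distance
invariance also makes the row sums `∑ u, K y u` constant, so the cross term of the square
only sees the uniform measure on `X`, and the discrepancy collapses to the difference of the
averages of `K` over `X × X` and `Z × Z`; the constant `c` cancels.
-/

open Finset

section GramKernel

variable {ι X : Type*}

def gramKernel (S : Finset ι) (φ : ι → X → ℝ) (y z : X) : ℝ :=
  ∑ i ∈ S, φ i y * φ i z

theorem sum_sum_gramKernel (S : Finset ι) (φ : ι → X → ℝ) (A B : Finset X) :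
    ∑ y ∈ A, ∑ z ∈ B, gramKernel S φ y z = ∑ i ∈ S, (∑ y ∈ A, φ i y) * ∑ z ∈ B, φ i z := by
  simp only [gramKernel, sum_mul_sum]
  rw [eq_comm, sum_comm]
  exact sum_congr rfl fun _ _ => sum_comm

theorem sum_sq_mul_sum_sub_mul_sum (S : Finset ι) (φ : ι → X → ℝ) (a b : ℝ)
    (A B : Finset X) :
    ∑ i ∈ S, (a * ∑ y ∈ A, φ i y - b * ∑ z ∈ B, φ i z) ^ 2
      = a ^ 2 * ∑ y ∈ A, ∑ z ∈ A, gramKernel S φ y z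
        - 2 * (a * b) * ∑ y ∈ A, ∑ z ∈ B, gramKernel S φ y z
        + b ^ 2 * ∑ y ∈ B, ∑ z ∈ B, gramKernel S φ y z := by
  rw [sum_sum_gramKernel, sum_sum_gramKernel, sum_sum_gramKernel, mul_sum, mul_sum, mul_sum,
    ← sum_sub_distrib, ← sum_add_distrib]
  exact sum_congr rfl fun _ _ => by ring

variable [Fintype X]

theorem sum_sq_avg_sub_avg_of_sum_gramKernel_eq (S : Finset ι) (φ : ι → X → ℝ)
    {Z : Finset X} (hZ : Z.Nonempty)
    (hrow : ∀ y z, ∑ u, gramKernel S φ y u = ∑ u, gramKernel S φ z u) :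
    ∑ i ∈ S, ((#Z : ℝ)⁻¹ * ∑ z ∈ Z, φ i z - (Fintype.card X : ℝ)⁻¹ * ∑ u, φ i u) ^ 2
      = (#Z : ℝ)⁻¹ ^ 2 * ∑ y ∈ Z, ∑ z ∈ Z, gramKernel S φ y z
        - (Fintype.card X : ℝ)⁻¹ ^ 2 * ∑ y, ∑ z, gramKernel S φ y z := by
  obtain ⟨z₀, hz₀⟩ := hZ
  have hN : (#Z : ℝ) ≠ 0 := by exact_mod_cast (card_pos.mpr ⟨z₀, hz₀⟩).ne'
  have hM : (Fintype.card X : ℝ) ≠ 0 := by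
    exact_mod_cast (Fintype.card_pos_iff.mpr ⟨z₀⟩).ne'
  have hrow' : ∀ A : Finset X, ∑ y ∈ A, ∑ u, gramKernel S φ y u
      = #A * ∑ u, gramKernel S φ z₀ u := fun A => by
    rw [sum_congr rfl fun y _ => hrow y z₀, sum_const, nsmul_eq_mul]
  rw [sum_sq_mul_sum_sub_mul_sum, hrow', hrow' univ, card_univ]
  field_simp
  ring

theorem sum_sq_avg_sub_avg_of_gramKernel_eq (S : Finset ι) (φ : ι → X → ℝ)
    {Z : Finset X} (hZ : Z.Nonempty) (c : ℝ) (L : X → X → ℝ)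
    (hK : ∀ y z, gramKernel S φ y z = c - L y z / 2)
    (hrow : ∀ y z, ∑ u, gramKernel S φ y u = ∑ u, gramKernel S φ z u) :
    ∑ i ∈ S, ((#Z : ℝ)⁻¹ * ∑ z ∈ Z, φ i z - (Fintype.card X : ℝ)⁻¹ * ∑ u, φ i u) ^ 2
      = (1 / 2) * ((Fintype.card X : ℝ)⁻¹ ^ 2 * ∑ y, ∑ z, L y z
        - (#Z : ℝ)⁻¹ ^ 2 * ∑ y ∈ Z, ∑ z ∈ Z, L y z) := by
  have hN : (#Z : ℝ) ≠ 0 := by exact_mod_cast hZ.card_pos.ne'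
  have hM : (Fintype.card X : ℝ) ≠ 0 := by
    exact_mod_cast (Fintype.card_pos_iff.mpr ⟨hZ.choose⟩).ne'
  rw [sum_sq_avg_sub_avg_of_sum_gramKernel_eq S φ hZ hrow]
  simp only [hK, sum_sub_distrib, sum_const, nsmul_eq_mul, ← sum_div, card_univ]
  field_simp
  ring

end GramKernel

theorem sum_range_succ_ite_le {a n : ℕ} (h : a ≤ n) :
    ∑ t ∈ range (n + 1), (if a ≤ t then (1 : ℝ) else 0) = n + 1 - a := by
  have hIco : {t ∈ range (n + 1) | a ≤ t} = Ico a (n + 1) := by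
    ext t; simp only [mem_filter, mem_range, mem_Ico]; omega
  rw [← natCast_card_filter, hIco, Nat.card_Ico, Nat.cast_sub (by omega)]
  push_cast
  ring

section BallKernel

variable {X : Type*} [Fintype X] (d : X → X → ℕ) (n : ℕ)

def ballIndicator (p : ℕ × X) (z : X) : ℝ :=
  if d p.2 z ≤ p.1 then 1 else 0

abbrev ballKernel : X → X → ℝ :=
  gramKernel (range (n + 1) ×ˢ univ) (ballIndicator d)

variable {d n}

theorem sum_dist_eq_sub_sum_card_ball (h_le : ∀ x y, d x y ≤ n) (y : X) :
    ∑ u, (d y u : ℝ)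
      = Fintype.card X * (n + 1) - ∑ t ∈ range (n + 1), (#{u | d y u ≤ t} : ℝ) := by
  simp only [natCast_card_filter]
  rw [sum_comm]
  simp only [sum_range_succ_ite_le (h_le _ _), sum_sub_distrib, sum_const, card_univ,
    nsmul_eq_mul]
  ring

theorem ballKernel_eq_sum_sub_max (h_le : ∀ x y, d x y ≤ n) (y z : X) :
    ballKernel d n y z = ∑ x, ((n : ℝ) + 1 - max (d x y : ℝ) (d x z)) := by
  rw [ballKernel, gramKernel, sum_product, sum_comm]
  refine sum_congr rfl fun x _ => ?_
  simp only [ballIndicator, ite_zero_mul_ite_zero, one_mul, ← max_le_iff]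
  rw [sum_range_succ_ite_le (max_le (h_le x y) (h_le x z)), Nat.cast_max]

theorem ballKernel_eq_const_sub (h_symm : ∀ x y, d x y = d y x) (h_le : ∀ x y, d x y ≤ n)
    (h_inv : ∀ (t : ℕ) (x y : X), #{z | d x z ≤ t} = #{z | d y z ≤ t}) (z₀ y z : X) :
    ballKernel d n y z = Fintype.card X * (n + 1) - ∑ u, (d z₀ u : ℝ)
      - (∑ u, |(d y u : ℝ) - d z u|) / 2 := by
  have hmax : ∀ a b : ℝ, max a b = (a + b + |a - b|) / 2 := fun a b => by
    have := min_add_max a b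
    have := max_sub_min_eq_abs a b
    rw [abs_sub_comm]
    linarith
  have hsum : ∀ y, ∑ u, (d y u : ℝ) = ∑ u, (d z₀ u : ℝ) := fun y => by
    simp only [sum_dist_eq_sub_sum_card_ball h_le, h_inv _ y z₀]
  rw [ballKernel_eq_sum_sub_max h_le]
  simp only [hmax, sum_sub_distrib, ← sum_div, sum_add_distrib, sum_const, card_univ,
    nsmul_eq_mul, h_symm _ y, h_symm _ z, hsum y, hsum z]
  ring

theorem sum_ballKernel_eq_sum_card_ball_sq (h_symm : ∀ x y, d x y = d y x)
    (h_inv : ∀ (t : ℕ) (x y : X), #{z | d x z ≤ t} = #{z | d y z ≤ t}) (y : X) :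
    ∑ u, ballKernel d n y u = ∑ t ∈ range (n + 1), (#{u | d y u ≤ t} : ℝ) ^ 2 := by
  simp only [ballKernel, gramKernel]
  rw [sum_comm, sum_product]
  refine sum_congr rfl fun t _ => ?_
  simp only [← mul_sum, ballIndicator, ← natCast_card_filter, h_inv t _ y, ← sum_mul]
  rw [sq]
  simp only [h_symm _ y]

end BallKernel

theorem stolarsky_invariance_finite_metric
    {X : Type*} [Fintype X] (n : ℕ) (d : X → X → ℕ)
    (h_symm : ∀ x y, d x y = d y x)
    (h_le : ∀ x y, d x y ≤ n)
    (h_inv : ∀ (t : ℕ) (x y : X),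
      (Finset.univ.filter (fun z => d x z ≤ t)).card
        = (Finset.univ.filter (fun z => d y z ≤ t)).card)
    (Z : Finset X) (hZ : Z.Nonempty) :
    ∑ t ∈ Finset.range (n + 1), ∑ x : X,
        ((Z.card : ℝ)⁻¹ * ((Z.filter (fun z => d x z ≤ t)).card : ℝ)
          - (Fintype.card X : ℝ)⁻¹ *
              ((Finset.univ.filter (fun z : X => d x z ≤ t)).card : ℝ)) ^ 2
      = (1 / 2) *
        ((Fintype.card X : ℝ)⁻¹ ^ 2 *
            ∑ x : X, ∑ y : X, ∑ u : X, |(d x u : ℝ) - (d y u : ℝ)|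
          - (Z.card : ℝ)⁻¹ ^ 2 *
            ∑ z₁ ∈ Z, ∑ z₂ ∈ Z, ∑ u : X, |(d z₁ u : ℝ) - (d z₂ u : ℝ)|) := by
  obtain ⟨z₀, hz₀⟩ := hZ
  have hrow : ∀ y z, ∑ u, ballKernel d n y u = ∑ u, ballKernel d n z u := fun y z => by
    simp only [sum_ballKernel_eq_sum_card_ball_sq h_symm h_inv, h_inv _ y z]
  have hdisc := sum_sq_avg_sub_avg_of_gramKernel_eq _ _ ⟨z₀, hz₀⟩ _ _
    (ballKernel_eq_const_sub h_symm h_le h_inv z₀) hrow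
  rw [sum_product] at hdisc
  simpa only [ballIndicator, natCast_card_filter] using hdisc
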